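/- Let ε ∈ [0,1). Suppose v : [0,1] → ℝ is continuous on [0,1] and differentiable on (0,1), and that the function (a,b) ↦ ln(a+b) + v(b/(a+b)) is strictly concave on the convex set {(a,b) ∈ [0,∞)² : a+b > 0}. Then there exists a (necessarily unique) point ȳ ∈ [0,1] such that the map y ↦ v(y) − ln(1−εy) is strictly increasing on [0,ȳ] and strictly decreasing on [ȳ,1]; in particular, ȳ is the unique maximizer of y ↦ v(y) − ln(1−εy) over [0,1]. Moreover, if 0 < ȳ < 1, then ȳ is the unique solution in (0,1) of the equation v'(x) = −ε/(1−εx). -/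

import Mathlib

open Set

/-- Lemma 4.1 (ii): existence of the upper (sell) boundary of the no-trade region.
Under strict concavity of the value function in bond/stock holdings, the map
`y ↦ v(y) − ln(1−εy)` is strictly increasing then strictly decreasing, with a unique
maximizer `ȳ`; if `ȳ` is interior it is the unique solution of `v'(x) = −ε/(1−εx)`. -/
theorem sell_boundary_exists (ε : ℝ) (hε0 : 0 ≤ ε) (hε1 : ε < 1) (v : ℝ → ℝ)
    (hv : ContinuousOn v (Icc 0 1))
    (hv' : ∀ x ∈ Ioo (0:ℝ) 1, DifferentiableAt ℝ v x)
    (hconc : StrictConcaveOn ℝ {p : ℝ × ℝ | 0 ≤ p.1 ∧ 0 ≤ p.2 ∧ 0 < p.1 + p.2}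
      (fun p : ℝ × ℝ => Real.log (p.1 + p.2) + v (p.2 / (p.1 + p.2)))) :
    ∃ yu ∈ Icc (0:ℝ) 1,
      StrictMonoOn (fun y => v y - Real.log (1 - ε * y)) (Icc 0 yu) ∧
      StrictAntiOn (fun y => v y - Real.log (1 - ε * y)) (Icc yu 1) ∧
      (∀ y ∈ Icc (0:ℝ) 1, y ≠ yu →
        v y - Real.log (1 - ε * y) < v yu - Real.log (1 - ε * yu)) ∧
      (yu ∈ Ioo (0:ℝ) 1 →
        deriv v yu = -ε / (1 - ε * yu) ∧
        ∀ x ∈ Ioo (0:ℝ) 1, deriv v x = -ε / (1 - ε * x) → x = yu) := by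
  set g : ℝ → ℝ := fun y => v y - Real.log (1 - ε * y) with hg_def
  set t : ℝ → ℝ := fun y => y / (1 - ε * y) with ht_def
  set h : ℝ → ℝ := fun s => Real.log (1 + ε * s) + v (s / (1 + ε * s)) with hh_def
  have hεpos : (0:ℝ) < 1 - ε := by linarith
  have hpos : ∀ y ∈ Icc (0:ℝ) 1, 0 < 1 - ε * y := by
    intro y hy
    nlinarith [hy.1, hy.2]
  -- t is strictly increasing on [0,1]
  have ht_lt : ∀ x ∈ Icc (0:ℝ) 1, ∀ y ∈ Icc (0:ℝ) 1, x < y → t x < t y := by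
    intro x hx y hy hxy
    rw [ht_def]
    simp only
    rw [div_lt_div_iff₀ (hpos x hx) (hpos y hy)]
    nlinarith
  have ht_mem : ∀ y ∈ Icc (0:ℝ) 1, t y ∈ Icc (0:ℝ) (1/(1-ε)) := by
    intro y hy
    constructor
    · exact div_nonneg hy.1 (hpos y hy).le
    · rw [ht_def]
      simp only
      rw [div_le_div_iff₀ (hpos y hy) hεpos]
      nlinarith [hy.1, hy.2]
  have hth : ∀ y ∈ Icc (0:ℝ) 1, h (t y) = g y := by
    intro y hy
    have hne := (hpos y hy).ne'
    have h1 : 1 + ε * t y = (1 - ε * y)⁻¹ := by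
      rw [ht_def]; field_simp; ring
    have h2 : t y / (1 + ε * t y) = y := by
      rw [h1, div_eq_mul_inv, inv_inv, ht_def]
      simp only
      rw [div_mul_cancel₀ _ hne]
    rw [hh_def]
    simp only
    rw [h2, h1, Real.log_inv]
    simp only [hg_def]
    ring
  -- strict concavity of h on [0, 1/(1-ε)]
  have hh_conc : StrictConcaveOn ℝ (Icc 0 (1/(1-ε))) h := by
    have key : ∀ s ∈ Icc (0:ℝ) (1/(1-ε)),
        ((1 - (1-ε)*s, s) : ℝ × ℝ) ∈ {p : ℝ × ℝ | 0 ≤ p.1 ∧ 0 ≤ p.2 ∧ 0 < p.1 + p.2} := by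
      intro s hs
      have h1 : (1-ε)*s ≤ 1 := by
        have h2 := hs.2
        rw [le_div_iff₀ hεpos] at h2
        linarith [mul_comm s (1-ε)]
      refine ⟨?_, hs.1, ?_⟩
      · show (0:ℝ) ≤ 1 - (1-ε)*s
        linarith
      · show (0:ℝ) < (1 - (1-ε)*s) + s
        nlinarith [hs.1]
    have hval : ∀ s : ℝ,
        (fun p : ℝ × ℝ => Real.log (p.1 + p.2) + v (p.2 / (p.1 + p.2))) (1 - (1-ε)*s, s)
          = h s := by
      intro s
      have hsum : (1 - (1-ε)*s) + s = 1 + ε * s := by ring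
      show Real.log ((1 - (1-ε)*s) + s) + v (s / ((1 - (1-ε)*s) + s)) = h s
      rw [hsum]
    refine ⟨convex_Icc _ _, fun s hs r hr hsr a b ha hb hab => ?_⟩
    have hne : ((1 - (1-ε)*s, s) : ℝ × ℝ) ≠ (1 - (1-ε)*r, r) := by
      intro hEq
      exact hsr (congrArg Prod.snd hEq)
    have hcombo : a • ((1 - (1-ε)*s, s) : ℝ × ℝ) + b • ((1 - (1-ε)*r, r) : ℝ × ℝ)
        = (1 - (1-ε)*(a*s+b*r), a*s+b*r) := by
      simp only [Prod.smul_mk, Prod.mk_add_mk, smul_eq_mul, Prod.mk.injEq]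
      constructor
      · linear_combination hab
      · trivial
    have h2 := hconc.2 (key s hs) (key r hr) hne ha hb hab
    rw [hcombo, hval s, hval r, hval (a*s+b*r)] at h2
    simp only [smul_eq_mul] at h2 ⊢
    exact h2
  -- quasi strict concavity of g
  have hQSC : ∀ x ∈ Icc (0:ℝ) 1, ∀ y ∈ Icc (0:ℝ) 1, ∀ z ∈ Icc (0:ℝ) 1,
      x < y → y < z → min (g x) (g z) < g y := by
    intro x hx y hy z hz hxy hyz
    have hpq : t x < t y := ht_lt x hx y hy hxy
    have hqr : t y < t z := ht_lt y hy z hz hyz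
    have hpr : t x < t z := hpq.trans hqr
    set a := (t z - t y)/(t z - t x) with ha_def
    set b := (t y - t x)/(t z - t x) with hb_def
    have hd : (0:ℝ) < t z - t x := by linarith
    have ha : 0 < a := div_pos (by linarith) hd
    have hb : 0 < b := div_pos (by linarith) hd
    have hab : a + b = 1 := by
      rw [ha_def, hb_def]
      field_simp
      ring
    have hcomb : a • t x + b • t z = t y := by
      simp only [smul_eq_mul, ha_def, hb_def]
      field_simp
      ring
    have hlt := hh_conc.2 (ht_mem x hx) (ht_mem z hz) (ne_of_lt hpr) ha hb hab
    rw [hcomb] at hlt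
    simp only [smul_eq_mul] at hlt
    rw [← hth x hx, ← hth y hy, ← hth z hz]
    have hm1 : min (h (t x)) (h (t z)) ≤ h (t x) := min_le_left _ _
    have hm2 : min (h (t x)) (h (t z)) ≤ h (t z) := min_le_right _ _
    have hmm : a * min (h (t x)) (h (t z)) + b * min (h (t x)) (h (t z))
        = min (h (t x)) (h (t z)) := by rw [← add_mul, hab, one_mul]
    linarith [mul_le_mul_of_nonneg_left hm1 ha.le, mul_le_mul_of_nonneg_left hm2 hb.le]
  -- continuity of g and existence of maximizer
  have hg_cont : ContinuousOn g (Icc 0 1) := by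
    apply hv.sub
    apply ContinuousOn.log
    · exact (continuous_const.sub (continuous_const.mul continuous_id)).continuousOn
    · intro y hy; exact (hpos y hy).ne'
  obtain ⟨yu, hyu, hmax⟩ := isCompact_Icc.exists_isMaxOn (nonempty_Icc.2 zero_le_one) hg_cont
  have hle : ∀ y ∈ Icc (0:ℝ) 1, g y ≤ g yu := fun y hy => hmax hy
  -- strict maximality
  have hstrict : ∀ y ∈ Icc (0:ℝ) 1, y ≠ yu → g y < g yu := by
    intro y hy hne
    rcases (hle y hy).lt_or_eq with hlt | heq
    · exact hlt
    · exfalso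
      rcases hne.lt_or_gt with hlt | hlt
      · have hm : (y + yu)/2 ∈ Icc (0:ℝ) 1 := ⟨by linarith [hy.1, hyu.1], by linarith [hy.2, hyu.2]⟩
        have hq := hQSC y hy ((y+yu)/2) hm yu hyu (by linarith) (by linarith)
        rw [heq, min_self] at hq
        exact absurd (hle _ hm) (not_le.2 hq)
      · have hm : (yu + y)/2 ∈ Icc (0:ℝ) 1 := ⟨by linarith [hy.1, hyu.1], by linarith [hy.2, hyu.2]⟩
        have hq := hQSC yu hyu ((yu+y)/2) hm y hy (by linarith) (by linarith)
        rw [heq, min_self] at hq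
        exact absurd (hle _ hm) (not_le.2 hq)
  -- strict monotonicity on [0, yu]
  have hmono : StrictMonoOn g (Icc 0 yu) := by
    intro x hx y hy hxy
    have hx1 : x ∈ Icc (0:ℝ) 1 := ⟨hx.1, hx.2.trans hyu.2⟩
    have hy1 : y ∈ Icc (0:ℝ) 1 := ⟨hy.1, hy.2.trans hyu.2⟩
    rcases hy.2.lt_or_eq with h2 | h2
    · have hq := hQSC x hx1 y hy1 yu hyu hxy h2
      rwa [min_eq_left (hle x hx1)] at hq
    · rw [h2]
      exact hstrict x hx1 (by rw [← h2]; exact hxy.ne)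
  -- strict antitonicity on [yu, 1]
  have hanti : StrictAntiOn g (Icc yu 1) := by
    intro x hx y hy hxy
    have hx1 : x ∈ Icc (0:ℝ) 1 := ⟨hyu.1.trans hx.1, hx.2⟩
    have hy1 : y ∈ Icc (0:ℝ) 1 := ⟨hyu.1.trans hy.1, hy.2⟩
    rcases hx.1.lt_or_eq with h2 | h2
    · have hq := hQSC yu hyu x hx1 y hy1 h2 hxy
      rwa [min_eq_right (hle y hy1)] at hq
    · rw [← h2]
      have hlt : yu < y := by rw [h2]; exact hxy
      exact hstrict y hy1 hlt.ne'
  refine ⟨yu, hyu, hmono, hanti, hstrict, ?_⟩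
  intro hyo
  have hpyu : 0 < 1 - ε * yu := hpos yu hyu
  constructor
  · -- first-order condition at interior maximizer
    have hd1 : HasDerivAt (fun y : ℝ => 1 - ε * y) (-ε) yu := by
      simpa using ((hasDerivAt_id yu).const_mul ε).const_sub 1
    have hd2 : HasDerivAt (fun y : ℝ => Real.log (1 - ε * y)) (-ε/(1-ε*yu)) yu :=
      hd1.log hpyu.ne'
    have hd3 : HasDerivAt g (deriv v yu - -ε/(1-ε*yu)) yu :=
      (hv' yu hyo).hasDerivAt.sub hd2
    have hloc : IsLocalMax g yu := hmax.isLocalMax (Icc_mem_nhds hyo.1 hyo.2)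
    have h0 := hloc.hasDerivAt_eq_zero hd3
    linarith [h0]
  · -- uniqueness of the interior critical point
    intro x hx hdx
    by_contra hne
    have hx1 : x ∈ Icc (0:ℝ) 1 := Ioo_subset_Icc_self hx
    have hpx : 0 < 1 - ε * x := hpos x hx1
    have hsm := ht_mem x hx1
    have h1 : 1 + ε * t x = (1 - ε * x)⁻¹ := by
      rw [ht_def]; field_simp; ring
    have h1pos : 0 < 1 + ε * t x := by
      rw [h1]; positivity
    have h2 : t x / (1 + ε * t x) = x := by
      rw [h1, div_eq_mul_inv, inv_inv, ht_def]
      simp only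
      rw [div_mul_cancel₀ _ hpx.ne']
    -- derivative of h vanishes at t x
    have hdenom : HasDerivAt (fun u : ℝ => 1 + ε * u) ε (t x) := by
      simpa using ((hasDerivAt_id (t x)).const_mul ε).const_add 1
    have hlog : HasDerivAt (fun u : ℝ => Real.log (1 + ε * u)) (ε / (1 + ε * t x)) (t x) :=
      hdenom.log h1pos.ne'
    have hinner : HasDerivAt (fun u : ℝ => u / (1 + ε * u))
        ((1 * (1 + ε * t x) - t x * ε)/(1 + ε * t x)^2) (t x) :=
      (hasDerivAt_id (t x)).div hdenom h1pos.ne'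
    have hvx : HasDerivAt v (deriv v x) (t x / (1 + ε * t x)) := by
      rw [h2]; exact (hv' x hx).hasDerivAt
    have hvc : HasDerivAt (fun u : ℝ => v (u / (1 + ε * u)))
        (deriv v x * ((1 * (1 + ε * t x) - t x * ε)/(1 + ε * t x)^2)) (t x) :=
      hvx.comp (t x) hinner
    have hh0 : HasDerivAt h 0 (t x) := by
      rw [hh_def]
      refine (hlog.add hvc).congr_deriv (Eq.symm ?_)
      rw [hdx, h1]
      have h3 : t x = x / (1 - ε * x) := rfl
      rw [h3]
      field_simp
      ring
    -- t x is the unique maximizer of h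
    have hsmax : ∀ w ∈ Icc (0:ℝ) (1/(1-ε)), w ≠ t x → h w < h (t x) := by
      intro w hw hwne
      rcases Ne.lt_or_gt hwne with hlt | hlt
      · have hs := hh_conc.lt_slope_of_hasDerivAt hw hsm hlt hh0
        rw [slope_def_field, lt_div_iff₀ (by linarith : (0:ℝ) < t x - w)] at hs
        linarith
      · have hs := hh_conc.slope_lt_of_hasDerivAt hsm hw hlt hh0
        rw [slope_def_field, div_lt_iff₀ (by linarith : (0:ℝ) < w - t x)] at hs
        linarith
    have htne : t yu ≠ t x := by
      rcases Ne.lt_or_gt hne with hlt | hlt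
      · exact (ht_lt x hx1 yu hyu hlt).ne'
      · exact (ht_lt yu hyu x hx1 hlt).ne
    have hfin := hsmax (t yu) (ht_mem yu hyu) htne
    rw [hth yu hyu, hth x hx1] at hfin
    exact absurd (hle x hx1) (not_le.2 hfin)
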